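/- Let g(p,q) be a Taylor–Fourier polynomial in n action variables p and n angle variables q, homogeneous of degree ℓ in p, and let χ(q) = X(q) + ξ·q where X is a trigonometric polynomial in q and ξ ∈ ℝⁿ. Then for every j with 1 ≤ j ≤ ℓ, the j-th term of the Lie series satisfies ‖(1/j!) L_χ^j g‖ ≤ C(ℓ,j) (max_i ‖∂X/∂q_i‖ + max_i |ξ_i|)^j ‖g‖, where C(ℓ,j) is the binomial coefficient, L_χ denotes the Poisson-bracket Lie derivative {·, χ}, and ‖·‖ is the ℓ¹-norm on Taylor–Fourier coefficients. Moreover L_χ^j g = 0 for j > ℓ. -/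

import Mathlib

/-!
Evaluation intertwines the Lie derivative `L_χ` with an explicit operator on coefficients.
Since `χ` does not depend on `p`, `L_χ g = ∑ᵢ (∂X/∂qᵢ + ξᵢ) ∂g/∂pᵢ`. Each term lowers the degree
in `p` by one, so `L_χ^j g = 0` for `j > ℓ`. In the ℓ¹-norm, `∑ᵢ ‖∂g/∂pᵢ‖ ≤ d ‖g‖` for `g` of
degree `d` (Euler), and the product-to-sum formulas make the norm submultiplicative, so
`‖L_χ g‖ ≤ (G + Ξ) d ‖g‖`. Iterating gives the bound `ℓ (ℓ - 1) ⋯ (ℓ - j + 1) (G + Ξ)^j ‖g‖`,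
which is `j! C(ℓ, j) (G + Ξ)^j ‖g‖`.
-/

/- Taylor–Fourier polynomials in n action variables p and n angle variables q:
   finitely supported real coefficients indexed by (power of p, Fourier harmonic k, cos/sin). -/
abbrev TFIdx (n : ℕ) := (Fin n →₀ ℕ) × (Fin n →₀ ℤ) × Bool
abbrev TF (n : ℕ) := TFIdx n →₀ ℝ

/-- ℓ¹-norm on Taylor–Fourier coefficients. -/
noncomputable def tfNorm {n : ℕ} (g : TF n) : ℝ := g.sum fun _ a => |a|

/-- Evaluation of a Taylor–Fourier polynomial at (p,q). -/
noncomputable def tfEval {n : ℕ} (g : TF n) (p q : Fin n → ℝ) : ℝ :=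
  g.sum fun m a => a * (∏ i, p i ^ m.1 i) *
    (if m.2.2 then Real.cos (∑ i, (m.2.1 i : ℝ) * q i)
     else Real.sin (∑ i, (m.2.1 i : ℝ) * q i))

/-- Formal partial derivative ∂/∂q_i on Taylor–Fourier coefficients. -/
noncomputable def tfDq {n : ℕ} (i : Fin n) (g : TF n) : TF n :=
  g.sum fun m a =>
    if m.2.2 then Finsupp.single (m.1, m.2.1, false) (-(a * (m.2.1 i : ℝ)))
    else Finsupp.single (m.1, m.2.1, true) (a * (m.2.1 i : ℝ))

/-- Degree in the actions p of a monomial index. -/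
def pdeg {n : ℕ} (m : TFIdx n) : ℕ := m.1.sum fun _ e => e

/-- Partial derivative in the action p_i, at the level of functions. -/
noncomputable def pderivP {n : ℕ} (f : (Fin n → ℝ) → (Fin n → ℝ) → ℝ) (i : Fin n)
    (p q : Fin n → ℝ) : ℝ :=
  deriv (fun t => f (Function.update p i t) q) (p i)

/-- Partial derivative in the angle q_i, at the level of functions. -/
noncomputable def pderivQ {n : ℕ} (f : (Fin n → ℝ) → (Fin n → ℝ) → ℝ) (i : Fin n)
    (p q : Fin n → ℝ) : ℝ :=
  deriv (fun t => f p (Function.update q i t)) (q i)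

/-- Poisson-bracket Lie derivative L_χ g = {g, χ}. -/
noncomputable def lieD {n : ℕ} (χ f : (Fin n → ℝ) → (Fin n → ℝ) → ℝ) :
    (Fin n → ℝ) → (Fin n → ℝ) → ℝ :=
  fun p q => ∑ i, (pderivP f i p q * pderivQ χ i p q - pderivQ f i p q * pderivP χ i p q)

section TaylorFourier

open Finset

variable {n : ℕ}

noncomputable def pMonomial (μ : Fin n →₀ ℕ) (p : Fin n → ℝ) : ℝ := ∏ i, p i ^ μ i

noncomputable def phase (k : Fin n →₀ ℤ) (q : Fin n → ℝ) : ℝ := ∑ i, (k i : ℝ) * q i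

noncomputable def tfBasis (m : TFIdx n) (p q : Fin n → ℝ) : ℝ :=
  pMonomial m.1 p * if m.2.2 then Real.cos (phase m.2.1 q) else Real.sin (phase m.2.1 q)

theorem pMonomial_add (μ ν : Fin n →₀ ℕ) (p : Fin n → ℝ) :
    pMonomial (μ + ν) p = pMonomial μ p * pMonomial ν p := by
  simp [pMonomial, pow_add, prod_mul_distrib]

theorem phase_add (k k' : Fin n →₀ ℤ) (q : Fin n → ℝ) :
    phase (k + k') q = phase k q + phase k' q := by
  simp [phase, add_mul, sum_add_distrib]

theorem phase_sub (k k' : Fin n →₀ ℤ) (q : Fin n → ℝ) :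
    phase (k - k') q = phase k q - phase k' q := by
  simp [phase, sub_mul, sum_sub_distrib]

theorem tfEval_eq_linearCombination (g : TF n) (p q : Fin n → ℝ) :
    tfEval g p q = Finsupp.linearCombination ℝ (tfBasis · p q) g := by
  simp [tfEval, Finsupp.linearCombination_apply, tfBasis, pMonomial, phase, mul_assoc]

theorem tfEval_zero (p q : Fin n → ℝ) : tfEval (0 : TF n) p q = 0 := by
  simp [tfEval_eq_linearCombination]

theorem tfEval_add (f g : TF n) (p q : Fin n → ℝ) :
    tfEval (f + g) p q = tfEval f p q + tfEval g p q := by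
  simp [tfEval_eq_linearCombination]

theorem tfEval_smul (c : ℝ) (g : TF n) (p q : Fin n → ℝ) :
    tfEval (c • g) p q = c * tfEval g p q := by
  simp [tfEval_eq_linearCombination]

theorem tfEval_single (m : TFIdx n) (a : ℝ) (p q : Fin n → ℝ) :
    tfEval (Finsupp.single m a) p q = a * tfBasis m p q := by
  simp [tfEval_eq_linearCombination]

theorem tfEval_sum {ι : Type*} (s : Finset ι) (f : ι → TF n) (p q : Fin n → ℝ) :
    tfEval (∑ x ∈ s, f x) p q = ∑ x ∈ s, tfEval (f x) p q := by
  simp [tfEval_eq_linearCombination]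

theorem tfEval_finsuppSum (g : TF n) (F : TFIdx n → ℝ → TF n) (p q : Fin n → ℝ) :
    tfEval (g.sum F) p q = g.sum fun m a => tfEval (F m a) p q :=
  tfEval_sum _ _ p q

theorem tfEval_eq_sum (g : TF n) (p q : Fin n → ℝ) :
    tfEval g p q = ∑ m ∈ g.support, g m * tfBasis m p q := by
  simp [tfEval_eq_linearCombination, Finsupp.linearCombination_apply, Finsupp.sum]

theorem tfNorm_eq_sum_of_support_subset (g : TF n) {s : Finset (TFIdx n)} (hs : g.support ⊆ s) :
    tfNorm g = ∑ m ∈ s, |g m| :=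
  Finsupp.sum_of_support_subset g hs _ fun _ _ => abs_zero

theorem tfNorm_nonneg (g : TF n) : 0 ≤ tfNorm g :=
  Finset.sum_nonneg fun _ _ => abs_nonneg _

theorem tfNorm_zero : tfNorm (0 : TF n) = 0 := by simp [tfNorm]

theorem tfNorm_single (m : TFIdx n) (a : ℝ) : tfNorm (Finsupp.single m a) = |a| :=
  Finsupp.sum_single_index abs_zero

theorem tfNorm_smul (c : ℝ) (g : TF n) : tfNorm (c • g) = |c| * tfNorm g := by
  rw [tfNorm_eq_sum_of_support_subset _ Finsupp.support_smul, tfNorm, Finsupp.sum, mul_sum]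
  simp [abs_mul]

theorem tfNorm_add_le (f g : TF n) : tfNorm (f + g) ≤ tfNorm f + tfNorm g := by
  classical
  rw [tfNorm_eq_sum_of_support_subset _ Finsupp.support_add,
    tfNorm_eq_sum_of_support_subset f subset_union_left,
    tfNorm_eq_sum_of_support_subset g subset_union_right, ← sum_add_distrib]
  exact sum_le_sum fun m _ => abs_add_le (f m) (g m)

theorem tfNorm_sum_le {ι : Type*} (s : Finset ι) (f : ι → TF n) :
    tfNorm (∑ x ∈ s, f x) ≤ ∑ x ∈ s, tfNorm (f x) :=
  Finset.le_sum_of_subadditive tfNorm tfNorm_zero.le tfNorm_add_le s f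

theorem tfNorm_finsuppSum_le (g : TF n) (F : TFIdx n → ℝ → TF n) :
    tfNorm (g.sum F) ≤ g.sum fun m a => tfNorm (F m a) :=
  tfNorm_sum_le _ _

theorem pdeg_eq_degree (m : TFIdx n) : pdeg m = m.1.degree := rfl

def IsPHomogeneous (g : TF n) (d : ℕ) : Prop := ∀ m ∈ g.support, pdeg m = d

theorem isPHomogeneous_zero (d : ℕ) : IsPHomogeneous (0 : TF n) d := by
  simp [IsPHomogeneous]

theorem isPHomogeneous_single {m : TFIdx n} {d : ℕ} (h : pdeg m = d) (a : ℝ) :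
    IsPHomogeneous (Finsupp.single m a) d := fun _ hm' => by
  rwa [Finset.mem_singleton.1 (Finsupp.support_single_subset hm')]

theorem IsPHomogeneous.add {f g : TF n} {d : ℕ} (hf : IsPHomogeneous f d)
    (hg : IsPHomogeneous g d) : IsPHomogeneous (f + g) d := by
  classical
  intro m hm
  rcases Finset.mem_union.1 (Finsupp.support_add hm) with hm | hm
  exacts [hf m hm, hg m hm]

theorem IsPHomogeneous.smul {g : TF n} {d : ℕ} (hg : IsPHomogeneous g d) (c : ℝ) :
    IsPHomogeneous (c • g) d := fun m hm => hg m (Finsupp.support_smul hm)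

theorem isPHomogeneous_sum {ι : Type*} {s : Finset ι} {f : ι → TF n} {d : ℕ}
    (h : ∀ x ∈ s, IsPHomogeneous (f x) d) : IsPHomogeneous (∑ x ∈ s, f x) d := by
  classical
  intro m hm
  obtain ⟨x, hx, hm⟩ := Finset.mem_biUnion.1 (Finsupp.support_finsetSum hm)
  exact h x hx m hm

theorem isPHomogeneous_finsuppSum {g : TF n} {F : TFIdx n → ℝ → TF n} {d : ℕ}
    (h : ∀ m ∈ g.support, IsPHomogeneous (F m (g m)) d) : IsPHomogeneous (g.sum F) d :=
  isPHomogeneous_sum h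

theorem IsPHomogeneous.fst_eq_zero {g : TF n} (hg : IsPHomogeneous g 0) :
    ∀ m ∈ g.support, m.1 = 0 := fun m hm =>
  (Finsupp.degree_eq_zero_iff m.1).1 (hg m hm)

theorem isPHomogeneous_zero_of_fst_eq_zero {g : TF n} (hg : ∀ m ∈ g.support, m.1 = 0) :
    IsPHomogeneous g 0 := fun m hm => by
  rw [pdeg_eq_degree, hg m hm, map_zero]

theorem IsPHomogeneous.eq_zero_of_isEmpty [IsEmpty (Fin n)] {g : TF n} {d : ℕ}
    (hg : IsPHomogeneous g d) (hd : d ≠ 0) : g = 0 := by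
  refine Finsupp.support_eq_empty.1 (Finset.eq_empty_of_forall_notMem fun m hm => hd ?_)
  rw [← hg m hm, pdeg_eq_degree, Subsingleton.elim m.1 0, map_zero]

noncomputable def tfDp (i : Fin n) (g : TF n) : TF n :=
  g.sum fun m a => Finsupp.single (m.1 - Finsupp.single i 1, m.2) (a * m.1 i)

theorem IsPHomogeneous.tfDp {g : TF n} {d : ℕ} (hg : IsPHomogeneous g d) (i : Fin n) :
    IsPHomogeneous (tfDp i g) (d - 1) := by
  refine isPHomogeneous_finsuppSum fun m hm => ?_
  by_cases hmi : m.1 i = 0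
  · simp [hmi, isPHomogeneous_zero]
  refine isPHomogeneous_single ?_ _
  have hle : Finsupp.single i 1 ≤ m.1 := Finsupp.single_le_iff.2 (Nat.one_le_iff_ne_zero.2 hmi)
  have hdeg := congrArg Finsupp.degree (tsub_add_cancel_of_le hle)
  rw [map_add, Finsupp.degree_single] at hdeg
  rw [← hg m hm, pdeg_eq_degree, pdeg_eq_degree, ← hdeg, Nat.add_sub_cancel]

theorem IsPHomogeneous.tfDq {g : TF n} {d : ℕ} (hg : IsPHomogeneous g d) (i : Fin n) :
    IsPHomogeneous (tfDq i g) d := by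
  refine isPHomogeneous_finsuppSum fun m hm => ?_
  split_ifs
  all_goals exact isPHomogeneous_single (by exact hg m hm) _

theorem tfDp_eq_zero_of_isPHomogeneous_zero {g : TF n} (hg : IsPHomogeneous g 0) (i : Fin n) :
    tfDp i g = 0 :=
  Finset.sum_eq_zero fun m hm => by simp [hg.fst_eq_zero m hm]

theorem hasDerivAt_sum_mul_update (c q : Fin n → ℝ) (i : Fin n) :
    HasDerivAt (fun t => ∑ x, c x * Function.update q i t x) (c i) (q i) := by
  have h := HasDerivAt.fun_sum fun x (_ : x ∈ univ) =>
    (hasDerivAt_pi.1 (hasDerivAt_update q i (q i)) x).const_mul (c x)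
  simpa [Pi.single_apply] using h

theorem hasDerivAt_pMonomial_update (μ : Fin n →₀ ℕ) (p : Fin n → ℝ) (i : Fin n) :
    HasDerivAt (fun t => pMonomial μ (Function.update p i t))
      (μ i * pMonomial (μ - Finsupp.single i 1) p) (p i) := by
  set C := ∏ x ∈ univ.erase i, p x ^ μ x
  have hsplit : ∀ (ν : Fin n →₀ ℕ) (r : Fin n → ℝ), pMonomial ν r
      = r i ^ ν i * ∏ x ∈ univ.erase i, r x ^ ν x := fun ν r =>
    (mul_prod_erase univ (fun x => r x ^ ν x) (mem_univ i)).symm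
  have hfun : ∀ t, pMonomial μ (Function.update p i t) = t ^ μ i * C := fun t => by
    rw [hsplit]
    refine congrArg₂ _ (by simp) (prod_congr rfl fun x hx => ?_)
    rw [Function.update_of_ne (ne_of_mem_erase hx)]
  have hval : pMonomial (μ - Finsupp.single i 1) p = p i ^ (μ i - 1) * C := by
    rw [hsplit]
    refine congrArg₂ _ (by simp) (prod_congr rfl fun x hx => ?_)
    simp [Finsupp.single_eq_of_ne (ne_of_mem_erase hx)]
  simp_rw [hfun, hval, ← mul_assoc]
  exact (hasDerivAt_pow (μ i) (p i)).mul_const C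

theorem hasDerivAt_tfBasis_p (m : TFIdx n) (i : Fin n) (p q : Fin n → ℝ) :
    HasDerivAt (fun t => tfBasis m (Function.update p i t) q)
      (m.1 i * tfBasis (m.1 - Finsupp.single i 1, m.2) p q) (p i) := by
  simp_rw [tfBasis, ← mul_assoc]
  exact (hasDerivAt_pMonomial_update m.1 p i).mul_const _

theorem hasDerivAt_tfBasis_q (m : TFIdx n) (i : Fin n) (p q : Fin n → ℝ) :
    HasDerivAt (fun t => tfBasis m p (Function.update q i t))
      (if m.2.2 then -(m.2.1 i * tfBasis (m.1, m.2.1, false) p q)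
        else m.2.1 i * tfBasis (m.1, m.2.1, true) p q) (q i) := by
  have hphase := hasDerivAt_sum_mul_update (fun x => (m.2.1 x : ℝ)) q i
  rcases m with ⟨μ, k, _ | _⟩
  · refine (((Real.hasDerivAt_sin _).comp (q i) hphase).const_mul (pMonomial μ p)).congr_deriv ?_
    simp only [tfBasis, phase, Function.update_eq_self, Bool.false_eq_true, if_true, if_false]
    ring
  · refine (((Real.hasDerivAt_cos _).comp (q i) hphase).const_mul (pMonomial μ p)).congr_deriv ?_
    simp only [tfBasis, phase, Function.update_eq_self, Bool.false_eq_true, if_true, if_false]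
    ring

theorem hasDerivAt_tfEval_p (g : TF n) (i : Fin n) (p q : Fin n → ℝ) :
    HasDerivAt (fun t => tfEval g (Function.update p i t) q) (tfEval (tfDp i g) p q) (p i) := by
  simp_rw [tfEval_eq_sum g]
  refine (HasDerivAt.fun_sum fun m _ =>
    (hasDerivAt_tfBasis_p m i p q).const_mul (g m)).congr_deriv ?_
  rw [tfDp, tfEval_finsuppSum]
  refine sum_congr rfl fun m _ => ?_
  dsimp only
  rw [tfEval_single]
  ring

theorem hasDerivAt_tfEval_q (g : TF n) (i : Fin n) (p q : Fin n → ℝ) :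
    HasDerivAt (fun t => tfEval g p (Function.update q i t)) (tfEval (tfDq i g) p q) (q i) := by
  simp_rw [tfEval_eq_sum g]
  refine (HasDerivAt.fun_sum fun m _ =>
    (hasDerivAt_tfBasis_q m i p q).const_mul (g m)).congr_deriv ?_
  rw [tfDq, tfEval_finsuppSum]
  refine sum_congr rfl fun m _ => ?_
  dsimp only
  split_ifs <;> rw [tfEval_single] <;> ring

theorem pderivP_tfEval (g : TF n) (i : Fin n) (p q : Fin n → ℝ) :
    pderivP (tfEval g) i p q = tfEval (tfDp i g) p q :=
  (hasDerivAt_tfEval_p g i p q).deriv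

theorem pderivQ_tfEval (g : TF n) (i : Fin n) (p q : Fin n → ℝ) :
    pderivQ (tfEval g) i p q = tfEval (tfDq i g) p q :=
  (hasDerivAt_tfEval_q g i p q).deriv

/-- The product-to-sum formulas: `cos a cos b = (cos (a + b) + cos (a - b)) / 2`, etc. -/
noncomputable def tfBasisMul : TFIdx n → TFIdx n → TF n
  | (μ, k, true), (μ', k', true) =>
      Finsupp.single (μ + μ', k + k', true) (1 / 2)
        + Finsupp.single (μ + μ', k - k', true) (1 / 2)
  | (μ, k, true), (μ', k', false) =>
      Finsupp.single (μ + μ', k + k', false) (1 / 2)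
        + Finsupp.single (μ + μ', k - k', false) (-1 / 2)
  | (μ, k, false), (μ', k', true) =>
      Finsupp.single (μ + μ', k + k', false) (1 / 2)
        + Finsupp.single (μ + μ', k - k', false) (1 / 2)
  | (μ, k, false), (μ', k', false) =>
      Finsupp.single (μ + μ', k - k', true) (1 / 2)
        + Finsupp.single (μ + μ', k + k', true) (-1 / 2)

theorem tfEval_tfBasisMul (m m' : TFIdx n) (p q : Fin n → ℝ) :
    tfEval (tfBasisMul m m') p q = tfBasis m p q * tfBasis m' p q := by
  rcases m with ⟨μ, k, _ | _⟩ <;> rcases m' with ⟨μ', k', _ | _⟩ <;>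
  · simp only [tfBasisMul, tfEval_add, tfEval_single, tfBasis, pMonomial_add, phase_add, phase_sub,
      Real.cos_add, Real.cos_sub, Real.sin_add, Real.sin_sub, Bool.false_eq_true, if_true, if_false]
    ring

theorem tfNorm_tfBasisMul_le (m m' : TFIdx n) : tfNorm (tfBasisMul m m') ≤ 1 := by
  rcases m with ⟨μ, k, _ | _⟩ <;> rcases m' with ⟨μ', k', _ | _⟩ <;>
  · refine (tfNorm_add_le _ _).trans ?_
    rw [tfNorm_single, tfNorm_single]
    norm_num

theorem IsPHomogeneous.tfBasisMul {m m' : TFIdx n} {d e : ℕ} (hm : pdeg m = d)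
    (hm' : pdeg m' = e) : IsPHomogeneous (tfBasisMul m m') (d + e) := by
  rcases m with ⟨μ, k, _ | _⟩ <;> rcases m' with ⟨μ', k', _ | _⟩ <;>
  · simp only [pdeg_eq_degree] at hm hm'
    exact .add (isPHomogeneous_single (by simp [pdeg_eq_degree, hm, hm']) _)
      (isPHomogeneous_single (by simp [pdeg_eq_degree, hm, hm']) _)

noncomputable def tfMul (f g : TF n) : TF n :=
  f.sum fun m a => g.sum fun m' b => (a * b) • tfBasisMul m m'

theorem tfEval_tfMul (f g : TF n) (p q : Fin n → ℝ) :
    tfEval (tfMul f g) p q = tfEval f p q * tfEval g p q := by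
  rw [tfMul, tfEval_finsuppSum, tfEval_eq_sum f, tfEval_eq_sum g, sum_mul_sum]
  refine sum_congr rfl fun m _ => ?_
  dsimp only
  rw [tfEval_finsuppSum]
  refine sum_congr rfl fun m' _ => ?_
  dsimp only
  rw [tfEval_smul, tfEval_tfBasisMul]
  ring

theorem tfNorm_tfMul_le (f g : TF n) : tfNorm (tfMul f g) ≤ tfNorm f * tfNorm g := by
  calc tfNorm (tfMul f g)
      ≤ f.sum fun m a => g.sum fun m' b => tfNorm ((a * b) • tfBasisMul m m') :=
        (tfNorm_finsuppSum_le _ _).trans (sum_le_sum fun _ _ => tfNorm_finsuppSum_le _ _)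
    _ ≤ f.sum fun m a => g.sum fun m' b => |a| * |b| := by
        refine sum_le_sum fun m _ => sum_le_sum fun m' _ => ?_
        dsimp only
        rw [tfNorm_smul, abs_mul]
        exact mul_le_of_le_one_right (by positivity) (tfNorm_tfBasisMul_le m m')
    _ = tfNorm f * tfNorm g := by
        simp only [tfNorm, Finsupp.sum, sum_mul_sum]

theorem IsPHomogeneous.tfMul {f g : TF n} {d e : ℕ} (hf : IsPHomogeneous f d)
    (hg : IsPHomogeneous g e) : IsPHomogeneous (tfMul f g) (d + e) :=
  isPHomogeneous_finsuppSum fun m hm => isPHomogeneous_finsuppSum fun m' hm' =>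
    (IsPHomogeneous.tfBasisMul (hf m hm) (hg m' hm')).smul _

noncomputable def tfLie (X : TF n) (ξ : Fin n → ℝ) (g : TF n) : TF n :=
  ∑ i, (tfMul (tfDq i X) (tfDp i g) + ξ i • tfDp i g)

theorem tfEval_tfLie {X : TF n} (hX : IsPHomogeneous X 0) (ξ : Fin n → ℝ) (g : TF n) :
    tfEval (tfLie X ξ g) = lieD (fun p q => tfEval X p q + ∑ i, ξ i * q i) (tfEval g) := by
  funext p q
  rw [tfLie, tfEval_sum, lieD]
  refine sum_congr rfl fun i _ => ?_
  have hχp : pderivP (fun p q => tfEval X p q + ∑ i, ξ i * q i) i p q = 0 := by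
    rw [pderivP, ((hasDerivAt_tfEval_p X i p q).add_const _).deriv,
      tfDp_eq_zero_of_isPHomogeneous_zero hX, tfEval_zero]
  have hχq : pderivQ (fun p q => tfEval X p q + ∑ i, ξ i * q i) i p q
      = tfEval (tfDq i X) p q + ξ i :=
    ((hasDerivAt_tfEval_q X i p q).add (hasDerivAt_sum_mul_update ξ q i)).deriv
  rw [hχp, hχq, pderivP_tfEval, pderivQ_tfEval, tfEval_add, tfEval_tfMul, tfEval_smul]
  ring

theorem IsPHomogeneous.tfLie {X g : TF n} {d : ℕ} (hg : IsPHomogeneous g d)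
    (hX : IsPHomogeneous X 0) (ξ : Fin n → ℝ) : IsPHomogeneous (tfLie X ξ g) (d - 1) :=
  isPHomogeneous_sum fun i _ =>
    .add (by simpa using (hX.tfDq i).tfMul (hg.tfDp i)) ((hg.tfDp i).smul _)

theorem tfLie_eq_zero_of_isPHomogeneous_zero (X : TF n) (ξ : Fin n → ℝ) {g : TF n}
    (hg : IsPHomogeneous g 0) : tfLie X ξ g = 0 := by
  simp [tfLie, tfDp_eq_zero_of_isPHomogeneous_zero hg, tfMul]

theorem sum_tfNorm_tfDp_le {g : TF n} {d : ℕ} (hg : IsPHomogeneous g d) :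
    ∑ i, tfNorm (tfDp i g) ≤ d * tfNorm g := by
  calc ∑ i, tfNorm (tfDp i g)
      ≤ ∑ i, ∑ m ∈ g.support, |g m| * m.1 i := sum_le_sum fun i _ =>
        (tfNorm_finsuppSum_le _ _).trans_eq (sum_congr rfl fun m _ => by
          dsimp only
          rw [tfNorm_single, abs_mul, Nat.abs_cast])
    _ = ∑ m ∈ g.support, |g m| * pdeg m := by
        rw [sum_comm]
        simp [pdeg_eq_degree, Finsupp.degree_eq_sum, mul_sum]
    _ = d * tfNorm g := by
        rw [tfNorm, Finsupp.sum, mul_sum]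
        exact sum_congr rfl fun m hm => by rw [hg m hm, mul_comm]

theorem tfNorm_tfLie_le {X g : TF n} {ξ : Fin n → ℝ} {G Ξ : ℝ} {d : ℕ}
    (hG : ∀ i, tfNorm (tfDq i X) ≤ G) (hΞ : ∀ i, |ξ i| ≤ Ξ) (hGΞ : 0 ≤ G + Ξ)
    (hg : IsPHomogeneous g d) : tfNorm (tfLie X ξ g) ≤ (G + Ξ) * (d * tfNorm g) := by
  calc tfNorm (tfLie X ξ g)
      ≤ ∑ i, tfNorm (tfMul (tfDq i X) (tfDp i g) + ξ i • tfDp i g) := tfNorm_sum_le _ _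
    _ ≤ ∑ i, (G + Ξ) * tfNorm (tfDp i g) := sum_le_sum fun i _ => by
        grw [tfNorm_add_le, tfNorm_tfMul_le, tfNorm_smul, hG i, hΞ i, add_mul]
        all_goals exact tfNorm_nonneg _
    _ ≤ (G + Ξ) * (d * tfNorm g) := by
        rw [← mul_sum]
        exact mul_le_mul_of_nonneg_left (sum_tfNorm_tfDp_le hg) hGΞ

section Iterates

variable {X g : TF n} {ξ : Fin n → ℝ} {ℓ : ℕ}

theorem isPHomogeneous_tfLie_iterate (hX : IsPHomogeneous X 0) (hg : IsPHomogeneous g ℓ)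
    (j : ℕ) : IsPHomogeneous ((tfLie X ξ)^[j] g) (ℓ - j) := by
  induction j with
  | zero => exact hg
  | succ j ih => simpa only [Function.iterate_succ_apply', Nat.sub_add_eq] using ih.tfLie hX ξ

theorem tfLie_iterate_eq_zero (hX : IsPHomogeneous X 0) (hg : IsPHomogeneous g ℓ) {j : ℕ}
    (hj : ℓ < j) : (tfLie X ξ)^[j] g = 0 := by
  obtain ⟨r, rfl⟩ : ∃ r, j = r + 1 + ℓ := ⟨j - ℓ - 1, by omega⟩
  have hℓ : IsPHomogeneous ((tfLie X ξ)^[ℓ] g) 0 := by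
    simpa using isPHomogeneous_tfLie_iterate hX hg ℓ
  rw [Function.iterate_add_apply, Function.iterate_succ_apply,
    tfLie_eq_zero_of_isPHomogeneous_zero X ξ hℓ,
    Function.iterate_fixed (tfLie_eq_zero_of_isPHomogeneous_zero X ξ (isPHomogeneous_zero 0))]

theorem tfNorm_tfLie_iterate_le (hX : IsPHomogeneous X 0) (hg : IsPHomogeneous g ℓ) {G Ξ : ℝ}
    (hG : ∀ i, tfNorm (tfDq i X) ≤ G) (hΞ : ∀ i, |ξ i| ≤ Ξ) (hGΞ : 0 ≤ G + Ξ) (j : ℕ) :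
    tfNorm ((tfLie X ξ)^[j] g) ≤ ℓ.descFactorial j * (G + Ξ) ^ j * tfNorm g := by
  induction j with
  | zero => simp
  | succ j ih =>
    calc tfNorm ((tfLie X ξ)^[j + 1] g)
        ≤ (G + Ξ) * ((ℓ - j : ℕ) * tfNorm ((tfLie X ξ)^[j] g)) := by
          rw [Function.iterate_succ_apply']
          exact tfNorm_tfLie_le hG hΞ hGΞ (isPHomogeneous_tfLie_iterate hX hg j)
      _ ≤ (G + Ξ) * ((ℓ - j : ℕ) * (ℓ.descFactorial j * (G + Ξ) ^ j * tfNorm g)) := by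
          gcongr
      _ = ℓ.descFactorial (j + 1) * (G + Ξ) ^ (j + 1) * tfNorm g := by
          rw [Nat.descFactorial_succ]
          push_cast
          ring

theorem tfNorm_inv_factorial_smul_tfLie_iterate_le (hX : IsPHomogeneous X 0)
    (hg : IsPHomogeneous g ℓ) {G Ξ : ℝ} (hG : ∀ i, tfNorm (tfDq i X) ≤ G)
    (hΞ : ∀ i, |ξ i| ≤ Ξ) (hGΞ : 0 ≤ G + Ξ) (j : ℕ) :
    tfNorm ((j.factorial : ℝ)⁻¹ • (tfLie X ξ)^[j] g) ≤ ℓ.choose j * (G + Ξ) ^ j * tfNorm g := by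
  rw [tfNorm_smul, abs_of_pos (by positivity), inv_mul_le_iff₀ (by positivity)]
  calc tfNorm ((tfLie X ξ)^[j] g) ≤ ℓ.descFactorial j * (G + Ξ) ^ j * tfNorm g :=
        tfNorm_tfLie_iterate_le hX hg hG hΞ hGΞ j
    _ = j.factorial * (ℓ.choose j * (G + Ξ) ^ j * tfNorm g) := by
        rw [Nat.descFactorial_eq_factorial_mul_choose]
        push_cast
        ring

end Iterates

end TaylorFourier

/-- Lie-series estimates for the generating function χ(q) = X(q) + ξ·q:
‖(1/j!) L_χ^j g‖ ≤ C(ℓ,j) (max_i ‖∂X/∂q_i‖ + max_i |ξ_i|)^j ‖g‖ for 1 ≤ j ≤ ℓ,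
and L_χ^j g = 0 for j > ℓ. -/
theorem lie_series_estimate_translation {n : ℕ} (ℓ : ℕ) (g X : TF n) (ξ : Fin n → ℝ)
    (hg : ∀ m ∈ g.support, pdeg m = ℓ)
    (hX : ∀ m ∈ X.support, m.1 = 0)
    (G Ξ : ℝ)
    (hG : ∀ i, tfNorm (tfDq i X) ≤ G)
    (hΞ : ∀ i, |ξ i| ≤ Ξ) :
    (∀ j : ℕ, 1 ≤ j → j ≤ ℓ →
      ∃ h : TF n,
        (∀ p q : Fin n → ℝ,
          tfEval h p q = (j.factorial : ℝ)⁻¹ *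
            (lieD (fun p q => tfEval X p q + ∑ i, ξ i * q i))^[j] (tfEval g) p q) ∧
        tfNorm h ≤ (ℓ.choose j : ℝ) * (G + Ξ) ^ j * tfNorm g) ∧
    (∀ j : ℕ, ℓ < j →
      (lieD (fun p q => tfEval X p q + ∑ i, ξ i * q i))^[j] (tfEval g) = fun _ _ => 0) := by
  have hX₀ := isPHomogeneous_zero_of_fst_eq_zero hX
  replace hg : IsPHomogeneous g ℓ := hg
  have hlie (j : ℕ) := (Function.Semiconj.iterate_right (tfEval_tfLie hX₀ ξ) j g).symm
  refine ⟨fun j hj hjℓ => ⟨(j.factorial : ℝ)⁻¹ • (tfLie X ξ)^[j] g,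
    fun p q => by rw [hlie, tfEval_smul], ?_⟩, fun j hj => ?_⟩
  · rcases isEmpty_or_nonempty (Fin n) with hn | ⟨⟨i⟩⟩
    · -- for `n = 0` the sign of `G + Ξ` is unconstrained, but `g` vanishes
      simp [IsPHomogeneous.eq_zero_of_isEmpty hg (by omega),
        tfLie_iterate_eq_zero hX₀ (isPHomogeneous_zero 0) hj, tfNorm_zero]
    · have hGΞ : 0 ≤ G + Ξ :=
        add_nonneg ((tfNorm_nonneg _).trans (hG i)) ((abs_nonneg _).trans (hΞ i))
      exact tfNorm_inv_factorial_smul_tfLie_iterate_le hX₀ hg hG hΞ hGΞ j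
  · rw [hlie, tfLie_iterate_eq_zero hX₀ hg hj]
    exact funext₂ tfEval_zero
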